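/- Let g, h: ℝ^p → ℝ ∪ {∞} be proper and lsc and μ ∈ ℝ be such that both g + (μ/2)‖·‖² and h + (μ/2)‖·‖² are convex, suppose φ = g − h is lower bounded, and let γ > 0 with γμ < 1 and 0 < λ < 2(1 − γμ). Then the iteration u^k = prox_{γh}(s^k), v^k = prox_{γg}(s^k), s^{k+1} = s^k + λ(v^k − u^k) (with each proximal mapping single-valued since γμ < 1) satisfies Σ_{k=0}^∞ ‖u^k − v^k‖² < ∞ and min_{i≤k} ‖u^i − v^i‖ = o(1/√k). -/

import Mathlib

open scoped InnerProductSpace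
noncomputable section

/-- `ℝ^p` as a Euclidean space. -/
abbrev Euc (p : ℕ) := EuclideanSpace ℝ (Fin p)

variable {p : ℕ}

/-- `f : ℝ^p → ℝ ∪ {∞}` (modelled with `EReal` values never equal to `-∞`) is proper. -/
def ProperFun (f : Euc p → EReal) : Prop :=
  (∀ x, f x ≠ ⊥) ∧ (∃ x, f x ≠ ⊤)

/-- Convexity for extended-real-valued functions. -/
def ConvexFun (f : Euc p → EReal) : Prop :=
  ∀ x y : Euc p, ∀ t : ℝ, 0 ≤ t → t ≤ 1 →
    f (t • x + (1 - t) • y) ≤ (t : EReal) * f x + ((1 - t : ℝ) : EReal) * f y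

/-- The convex subdifferential `∂f(x)`. -/
def Subdiff (f : Euc p → EReal) (x : Euc p) : Set (Euc p) :=
  {v | ∀ z, f x + ((⟪v, z - x⟫_ℝ : ℝ) : EReal) ≤ f z}

/-- `u` minimizes `w ↦ f(w) + (1/(2γ))‖w − x‖²`. -/
def ProxObjMin (f : Euc p → EReal) (γ : ℝ) (x u : Euc p) : Prop :=
  ∀ w, f u + ((1/(2*γ) * ‖u - x‖^2 : ℝ) : EReal) ≤ f w + ((1/(2*γ) * ‖w - x‖^2 : ℝ) : EReal)

/-- `u = prox_{γf}(x)`: `u` is the unique minimizer of `w ↦ f(w) + (1/(2γ))‖w − x‖²`. -/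
def IsProxOf (f : Euc p → EReal) (γ : ℝ) (x u : Euc p) : Prop :=
  ProxObjMin f γ x u ∧ ∀ w, ProxObjMin f γ x w → w = u

/-- The Moreau envelope `f^γ(x) = inf_w { f(w) + (1/(2γ))‖w − x‖² }`, as an extended real. -/
def moreau (f : Euc p → EReal) (γ : ℝ) (x : Euc p) : EReal :=
  ⨅ w : Euc p, f w + ((1/(2*γ) * ‖w - x‖^2 : ℝ) : EReal)

/-- The (real-valued) Moreau envelope. -/
def moreauR (f : Euc p → EReal) (γ : ℝ) (x : Euc p) : ℝ := (moreau f γ x).toReal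

/-- The DC envelope `φ_γ = g^γ − h^γ`. -/
def dce (g h : Euc p → EReal) (γ : ℝ) (s : Euc p) : ℝ := moreauR g γ s - moreauR h γ s

/-- The DC function `φ = g − h`, with the convention `∞ − ∞ = ∞`. -/
def dcVal (g h : Euc p → EReal) (x : Euc p) : EReal :=
  if g x = ⊤ then ⊤ else g x - h x

open Filter Topology

/-! The DC envelope `φ_γ = g^γ − h^γ` is a Lyapunov function for the iteration. Since `v^k`
and `u^k` attain the two envelopes at `s^k`, `φ_γ(s^k) ≥ g(v^k) − h(v^k) ≥ inf φ`. Across one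
step, `v^k` remains a competitor for `g^γ(s^{k+1})`, while the `h`-objective, being
`(1/γ − μ)`-strongly convex, grows quadratically around its minimizer `u^k`; Young's inequality
on the remaining cross term gives `φ_γ(s^{k+1}) + κ ‖u^k − v^k‖² ≤ φ_γ(s^k)` with
`κ = λ/γ − λ²/(2γ(1 − γμ))`, which is positive for `0 < λ < 2(1 − γμ)`. Telescoping gives
`Σ ‖u^k − v^k‖² < ∞`, and the rate holds because `(k + 1)/2` times the minimum of the first
`k + 1` terms is bounded by the tail sum from `⌊k/2⌋` to `k`. -/

section InnerProduct

variable {E : Type*} [NormedAddCommGroup E] [InnerProductSpace ℝ E]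

lemma norm_smul_add_one_sub_smul_sub_sq (x y z : E) (t : ℝ) :
    ‖t • x + (1 - t) • y - z‖^2
      = t * ‖x - z‖^2 + (1 - t) * ‖y - z‖^2 - t * (1 - t) * ‖x - y‖^2 := by
  rw [show t • x + (1 - t) • y - z = t • (x - z) + (1 - t) • (y - z) by module,
    norm_add_sq_real, real_inner_smul_left, real_inner_smul_right, norm_smul, norm_smul,
    Real.norm_eq_abs, Real.norm_eq_abs, mul_pow, mul_pow, sq_abs, sq_abs,
    show x - y = (x - z) - (y - z) by abel, norm_sub_sq_real (x - z)]
  ring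

lemma mul_inner_le_mul_norm_sq_add {β : ℝ} (hβ : 0 < β) (c : ℝ) (d e : E) :
    c * ⟪d, e⟫_ℝ ≤ β * ‖d‖^2 + c^2 / (4 * β) * ‖e‖^2 := by
  have hsq : 0 ≤ ‖(2 * β) • d - c • e‖^2 := sq_nonneg _
  rw [norm_sub_sq_real, real_inner_smul_left, real_inner_smul_right, norm_smul, norm_smul,
    Real.norm_eq_abs, Real.norm_eq_abs, mul_pow, mul_pow, sq_abs, sq_abs] at hsq
  rw [← sub_nonneg]
  have hform : β * ‖d‖^2 + c^2 / (4 * β) * ‖e‖^2 - c * ⟪d, e⟫_ℝ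
      = ((2 * β)^2 * ‖d‖^2 - 2 * (2 * β * (c * ⟪d, e⟫_ℝ)) + c^2 * ‖e‖^2) / (4 * β) := by
    field_simp
    ring
  rw [hform]
  positivity

end InnerProduct

section Prox

variable {f : Euc p → EReal} {μ γ : ℝ}

lemma hypoconvex_toReal_le (hbot : ∀ x, f x ≠ ⊥)
    (hconv : ConvexFun (fun x => f x + ((μ/2 * ‖x‖^2 : ℝ) : EReal)))
    {x y : Euc p} (hx : f x ≠ ⊤) (hy : f y ≠ ⊤) {t : ℝ} (ht0 : 0 ≤ t) (ht1 : t ≤ 1) :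
    f (t • x + (1 - t) • y) ≠ ⊤ ∧
      (f (t • x + (1 - t) • y)).toReal
        ≤ t * (f x).toReal + (1 - t) * (f y).toReal + μ/2 * (t * (1 - t)) * ‖x - y‖^2 := by
  have h := hconv x y t ht0 ht1
  simp only at h
  rw [← EReal.coe_toReal hx (hbot x), ← EReal.coe_toReal hy (hbot y), ← EReal.coe_add,
    ← EReal.coe_add, ← EReal.coe_mul, ← EReal.coe_mul, ← EReal.coe_add] at h
  have hz : f (t • x + (1 - t) • y) ≠ ⊤ := by
    intro hT
    rw [hT, EReal.top_add_coe] at h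
    exact (EReal.coe_lt_top _).not_ge h
  refine ⟨hz, ?_⟩
  rw [← EReal.coe_toReal hz (hbot _), ← EReal.coe_add, EReal.coe_le_coe_iff] at h
  have hnorm := norm_smul_add_one_sub_smul_sub_sq x y 0 t
  simp only [sub_zero] at hnorm
  linear_combination h - μ/2 * hnorm

namespace ProxObjMin

variable {x u : Euc p}

lemma ne_top (hf : ProperFun f) (hm : ProxObjMin f γ x u) : f u ≠ ⊤ := by
  obtain ⟨w, hw⟩ := hf.2
  intro hT
  have h := hm w
  rw [hT, EReal.top_add_coe, ← EReal.coe_toReal hw (hf.1 w), ← EReal.coe_add] at h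
  exact (EReal.coe_lt_top _).not_ge h

lemma toReal_le (hm : ProxObjMin f γ x u) (hbot : ∀ y, f y ≠ ⊥) (hu : f u ≠ ⊤)
    {w : Euc p} (hw : f w ≠ ⊤) :
    (f u).toReal + 1/(2*γ) * ‖u - x‖^2 ≤ (f w).toReal + 1/(2*γ) * ‖w - x‖^2 := by
  have h := hm w
  rwa [← EReal.coe_toReal hu (hbot u), ← EReal.coe_toReal hw (hbot w),
    ← EReal.coe_add, ← EReal.coe_add, EReal.coe_le_coe_iff] at h

lemma moreauR_eq (hm : ProxObjMin f γ x u) (hbot : f u ≠ ⊥) (hu : f u ≠ ⊤) :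
    moreauR f γ x = (f u).toReal + 1/(2*γ) * ‖u - x‖^2 := by
  have hmoreau : moreau f γ x = f u + ((1/(2*γ) * ‖u - x‖^2 : ℝ) : EReal) :=
    le_antisymm (iInf_le _ u) (le_iInf hm)
  rw [moreauR, hmoreau, EReal.toReal_add hu hbot (EReal.coe_ne_top _) (EReal.coe_ne_bot _),
    EReal.toReal_coe]

lemma add_sq_le_of_hypoconvex (hm : ProxObjMin f γ x u) (hbot : ∀ y, f y ≠ ⊥)
    (hconv : ConvexFun (fun x => f x + ((μ/2 * ‖x‖^2 : ℝ) : EReal))) (hu : f u ≠ ⊤)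
    {w : Euc p} (hw : f w ≠ ⊤) :
    (f u).toReal + 1/(2*γ) * ‖u - x‖^2 + (1/(2*γ) - μ/2) * ‖w - u‖^2
      ≤ (f w).toReal + 1/(2*γ) * ‖w - x‖^2 := by
  set A := (f u).toReal + 1/(2*γ) * ‖u - x‖^2
  set B := (1/(2*γ) - μ/2) * ‖w - u‖^2
  have hsegment : ∀ t ∈ Set.Ioc (0 : ℝ) 1, A + (1 - t) * B
      ≤ (f w).toReal + 1/(2*γ) * ‖w - x‖^2 := by
    rintro t ⟨ht0, ht1⟩
    obtain ⟨hz, hconv_t⟩ := hypoconvex_toReal_le hbot hconv hw hu ht0.le ht1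
    have hmin := hm.toReal_le hbot hu hz
    have hnorm := norm_smul_add_one_sub_smul_sub_sq w u x t
    refine le_of_mul_le_mul_left ?_ ht0
    linear_combination hmin + hconv_t + 1/(2*γ) * hnorm
  have hlim : Tendsto (fun t : ℝ => A + (1 - t) * B) (𝓝[>] 0) (𝓝 (A + B)) := by
    have hcont : Continuous (fun t : ℝ => A + (1 - t) * B) := by fun_prop
    simpa using (hcont.tendsto 0).mono_left nhdsWithin_le_nhds
  exact le_of_tendsto hlim (eventually_of_mem (Ioc_mem_nhdsGT one_pos) hsegment)

end ProxObjMin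

end Prox

section DCEnvelope

variable {g h : Euc p → EReal} {γ : ℝ} {s u v : Euc p}

lemma le_dce_of_le_dcVal (hg : ProperFun g) (hh : ProperFun h) {c : ℝ}
    (hc : ∀ x, (c : EReal) ≤ dcVal g h x) (hu : ProxObjMin h γ s u)
    (hv : ProxObjMin g γ s v) : c ≤ dce g h γ s := by
  have hgv := hv.ne_top hg
  have hhu := hu.ne_top hh
  have hcv := hc v
  have hhv : h v ≠ ⊤ := by
    intro hT
    rw [dcVal, if_neg hgv, hT, EReal.sub_top] at hcv
    exact (EReal.bot_lt_coe c).not_ge hcv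
  rw [dcVal, if_neg hgv, ← EReal.coe_toReal hgv (hg.1 v), ← EReal.coe_toReal hhv (hh.1 v),
    ← EReal.coe_sub, EReal.coe_le_coe_iff] at hcv
  have hmin := hu.toReal_le hh.1 hhu hhv
  rw [dce, hv.moreauR_eq (hg.1 v) hgv, hu.moreauR_eq (hh.1 u) hhu]
  linarith

lemma dce_step_add_le {μ lam : ℝ} (hg : ProperFun g) (hh : ProperFun h)
    (hh_hypo : ConvexFun (fun x => h x + ((μ/2 * ‖x‖^2 : ℝ) : EReal)))
    (hγ : 0 < γ) (hγμ : γ * μ < 1) {u' v' : Euc p}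
    (hu : ProxObjMin h γ s u) (hv : ProxObjMin g γ s v)
    (hu' : ProxObjMin h γ (s + lam • (v - u)) u') (hv' : ProxObjMin g γ (s + lam • (v - u)) v') :
    dce g h γ (s + lam • (v - u)) + (lam/γ - lam^2/(2*γ*(1 - γ*μ))) * ‖u - v‖^2
      ≤ dce g h γ s := by
  set e := v - u
  have hgv := hv.ne_top hg
  have hgv' := hv'.ne_top hg
  have hhu := hu.ne_top hh
  have hhu' := hu'.ne_top hh
  have hg_step := hv'.toReal_le hg.1 hgv' hgv
  have hh_growth := hu.add_sq_le_of_hypoconvex hh.1 hh_hypo hhu hhu'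
  have hβ : 0 < 1/(2*γ) - μ/2 := by
    rw [show 1/(2*γ) - μ/2 = (1 - γ*μ)/(2*γ) by field_simp]
    exact div_pos (by linarith) (by linarith)
  have hcoeff : (lam/γ)^2 / (4 * (1/(2*γ) - μ/2)) = lam^2/(2*γ*(1 - γ*μ)) := by
    have : 1 - γ*μ ≠ 0 := by linarith
    field_simp
    ring
  have hyoung := mul_inner_le_mul_norm_sq_add hβ (lam/γ) (u' - u) e
  rw [hcoeff] at hyoung
  have hshift : ∀ z, ‖z - (s + lam • e)‖^2
      = ‖z - s‖^2 - 2 * lam * ⟪z - s, e⟫_ℝ + lam^2 * ‖e‖^2 := by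
    intro z
    rw [show z - (s + lam • e) = (z - s) - lam • e by abel, norm_sub_sq_real,
      real_inner_smul_right, norm_smul, Real.norm_eq_abs, mul_pow, sq_abs]
    ring
  have hinner : ⟪v - s, e⟫_ℝ - ⟪u' - s, e⟫_ℝ = ‖e‖^2 - ⟪u' - u, e⟫_ℝ := by
    rw [← inner_sub_left, ← real_inner_self_eq_norm_sq, ← inner_sub_left]
    congr 1
    simp only [e]
    abel
  rw [dce, dce, hv'.moreauR_eq (hg.1 v') hgv', hu'.moreauR_eq (hh.1 u') hhu',
    hv.moreauR_eq (hg.1 v) hgv, hu.moreauR_eq (hh.1 u) hhu, norm_sub_rev u v]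
  linear_combination hg_step + hh_growth + hyoung + 1/(2*γ) * hshift v
    - 1/(2*γ) * hshift u' - lam/γ * hinner

end DCEnvelope

lemma summable_of_succ_add_mul_le {Φ a : ℕ → ℝ} {c κ : ℝ} (hκ : 0 < κ) (ha : ∀ k, 0 ≤ a k)
    (hΦ : ∀ k, c ≤ Φ k) (hdesc : ∀ k, Φ (k + 1) + κ * a k ≤ Φ k) : Summable a := by
  refine summable_of_sum_range_le (c := (Φ 0 - c) / κ) ha fun n => ?_
  rw [le_div_iff₀ hκ, Finset.sum_mul]
  calc ∑ k ∈ Finset.range n, a k * κ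
      ≤ ∑ k ∈ Finset.range n, (Φ k - Φ (k + 1)) :=
        Finset.sum_le_sum fun k _ => by linarith [hdesc k]
    _ = Φ 0 - Φ n := Finset.sum_range_sub' Φ n
    _ ≤ Φ 0 - c := by linarith [hΦ n]

lemma mul_iInf_le_sum_Ico {a : ℕ → ℝ} (ha : ∀ k, 0 ≤ a k) (k : ℕ) :
    ((k : ℝ) + 1) * ⨅ i : Fin (k + 1), a i ≤ 2 * ∑ i ∈ Finset.Ico (k / 2) (k + 1), a i := by
  set m := ⨅ i : Fin (k + 1), a i
  have hm : 0 ≤ m := le_ciInf fun i => ha i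
  have hcard : (k : ℝ) + 1 ≤ 2 * ((k + 1 - k / 2 : ℕ) : ℝ) := by
    have : k + 1 ≤ 2 * (k + 1 - k / 2) := by omega
    exact_mod_cast this
  have hsum : ((k + 1 - k / 2 : ℕ) : ℝ) * m ≤ ∑ i ∈ Finset.Ico (k / 2) (k + 1), a i := by
    have := Finset.card_nsmul_le_sum (Finset.Ico (k / 2) (k + 1)) a m fun i hi =>
      ciInf_le (Set.finite_range _).bddBelow (⟨i, (Finset.mem_Ico.1 hi).2⟩ : Fin (k + 1))
    rwa [Nat.card_Ico, nsmul_eq_mul] at this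
  nlinarith

lemma tendsto_mul_iInf_of_summable {a : ℕ → ℝ} (ha : ∀ k, 0 ≤ a k) (hsum : Summable a) :
    Tendsto (fun k : ℕ => ((k : ℝ) + 1) * ⨅ i : Fin (k + 1), a i)
      atTop (𝓝 0) := by
  have hS := hsum.hasSum.tendsto_sum_nat
  have htail : Tendsto (fun k => 2 * ∑ i ∈ Finset.Ico (k / 2) (k + 1), a i)
      atTop (𝓝 0) := by
    have hdiff := (hS.comp (tendsto_add_atTop_nat 1)).sub
      (hS.comp (Nat.tendsto_div_const_atTop two_ne_zero))
    rw [sub_self] at hdiff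
    simpa [Finset.sum_Ico_eq_sub _ (Nat.div_le_self _ _ |>.trans (Nat.le_succ _))]
      using hdiff.const_mul 2
  refine squeeze_zero (fun k => ?_) (mul_iInf_le_sum_Ico ha) htail
  exact mul_nonneg (by positivity) (le_ciInf fun i => ha i)

open Filter in
theorem statement16_general
    (g h : Euc p → EReal)
    (hg_proper : ProperFun g)
    (hh_proper : ProperFun h)
    (μ : ℝ)
    (hh_hypo : ConvexFun (fun x => h x + ((μ/2 * ‖x‖^2 : ℝ) : EReal)))
    (hlb : ∃ c : ℝ, ∀ x, (c : EReal) ≤ dcVal g h x)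
    (γ : ℝ) (hγ : 0 < γ) (hγμ : γ * μ < 1)
    (lam : ℝ) (hlam0 : 0 < lam) (hlam2 : lam < 2 * (1 - γ * μ))
    (s u v : ℕ → Euc p)
    (hu : ∀ k, IsProxOf h γ (s k) (u k)) (hv : ∀ k, IsProxOf g γ (s k) (v k))
    (hs : ∀ k, s (k+1) = s k + lam • (v k - u k)) :
    Summable (fun k => ‖u k - v k‖^2) ∧
      Tendsto (fun k : ℕ => ((k : ℝ) + 1) * ⨅ i : Fin (k+1), ‖u i - v i‖^2)
        atTop (nhds 0) := by
  obtain ⟨c, hc⟩ := hlb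
  have hκ : 0 < lam/γ - lam^2/(2*γ*(1 - γ*μ)) := by
    have hone : 0 < 1 - γ*μ := by linarith
    rw [show lam/γ - lam^2/(2*γ*(1 - γ*μ)) = lam * (2*(1 - γ*μ) - lam)/(2*γ*(1 - γ*μ)) by
      field_simp]
    exact div_pos (mul_pos hlam0 (by linarith)) (mul_pos (by linarith) hone)
  have hdesc : ∀ k, dce g h γ (s (k+1)) + (lam/γ - lam^2/(2*γ*(1 - γ*μ))) * ‖u k - v k‖^2
      ≤ dce g h γ (s k) := fun k => by
    have hu' := (hu (k+1)).1
    have hv' := (hv (k+1)).1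
    rw [hs k] at hu' hv' ⊢
    exact dce_step_add_le hg_proper hh_proper hh_hypo hγ hγμ (hu k).1 (hv k).1 hu' hv'
  have hsum : Summable (fun k => ‖u k - v k‖^2) :=
    summable_of_succ_add_mul_le hκ (fun k => sq_nonneg _)
      (fun k => le_dce_of_le_dcVal hg_proper hh_proper hc (hu k).1 (hv k).1) hdesc
  exact ⟨hsum, tendsto_mul_iInf_of_summable (a := fun k => ‖u k - v k‖^2)
    (fun k => sq_nonneg _) hsum⟩

open Filter in
/-- hypoconvex version. If `g + (μ/2)‖·‖²` and `h + (μ/2)‖·‖²` are convex,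
`φ = g − h` is lower bounded, `γμ < 1` and `0 < λ < 2(1 − γμ)`, the iterates satisfy
`Σ_k ‖u^k − v^k‖² < ∞` and `min_{i≤k}‖u^i − v^i‖ = o(1/√k)`. -/
theorem statement16
    (g h : Euc p → EReal)
    (hg_proper : ProperFun g) (hg_lsc : LowerSemicontinuous g)
    (hh_proper : ProperFun h) (hh_lsc : LowerSemicontinuous h)
    (μ : ℝ)
    (hg_hypo : ConvexFun (fun x => g x + ((μ/2 * ‖x‖^2 : ℝ) : EReal)))
    (hh_hypo : ConvexFun (fun x => h x + ((μ/2 * ‖x‖^2 : ℝ) : EReal)))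
    (hlb : ∃ c : ℝ, ∀ x, (c : EReal) ≤ dcVal g h x)
    (γ : ℝ) (hγ : 0 < γ) (hγμ : γ * μ < 1)
    (lam : ℝ) (hlam0 : 0 < lam) (hlam2 : lam < 2 * (1 - γ * μ))
    (s u v : ℕ → Euc p)
    (hu : ∀ k, IsProxOf h γ (s k) (u k)) (hv : ∀ k, IsProxOf g γ (s k) (v k))
    (hs : ∀ k, s (k+1) = s k + lam • (v k - u k)) :
    Summable (fun k => ‖u k - v k‖^2) ∧
      Tendsto (fun k : ℕ => ((k : ℝ) + 1) * ⨅ i : Fin (k+1), ‖u i - v i‖^2)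
        atTop (nhds 0) :=
  statement16_general g h hg_proper hh_proper μ hh_hypo hlb γ hγ hγμ lam hlam0 hlam2 s u v hu hv hs
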